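/- arXiv:1909.12580 — 5 statements merged into one kernel-verified Lean document; each statement's English description precedes it below -/
import Mathlib

section
/- Let A be an n×d real matrix with singular value decomposition A = UΣVᵀ (U orthonormal columns), and let Π be an n×r real matrix satisfying ‖I − UᵀΠΠᵀU‖₂ ≤ ε. Define Ã = (AᵀΠΠᵀA)^{1/2} (the positive semidefinite square root). Then for all x ∈ ℝᵈ, (1−ε)‖Ax‖₂² ≤ ‖Ãx‖₂² ≤ (1+ε)‖Ax‖₂². -/
/-
Writing `A = U (S Vᵀ)` and `y = S Vᵀ x`, the isometry `Uᵀ U = 1` gives `‖A x‖² = ‖y‖²`, while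
`‖Ã x‖² = xᵀ Aᵀ Π Πᵀ A x = yᵀ (Uᵀ Π Πᵀ U) y = ‖y‖² - yᵀ M y` with `M = I - Uᵀ Π Πᵀ U`.
Cauchy–Schwarz and the definition of the spectral norm bound `|yᵀ M y|` by `ε ‖y‖²`.
-/

open Matrix

/-- Squared Euclidean norm of a vector. -/
noncomputable def sqnorm2 {n : ℕ} (v : Fin n → ℝ) : ℝ := ∑ i, (v i) ^ 2

/-- Spectral (operator) norm of a real matrix. -/
noncomputable def specNorm {m n : ℕ} (M : Matrix (Fin m) (Fin n) ℝ) : ℝ :=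
  sSup {c | ∃ x : Fin n → ℝ, sqnorm2 x = 1 ∧ c = Real.sqrt (sqnorm2 (M.mulVec x))}

/-- The positive semidefinite square root of a positive semidefinite matrix
(the definition `Matrix.PosSemidef.sqrt` of the older Mathlib, since removed). -/
noncomputable def Matrix.PosSemidef.sqrt {n : Type*} [Fintype n] [DecidableEq n]
    {A : Matrix n n ℝ} (hA : A.PosSemidef) : Matrix n n ℝ :=
  hA.1.eigenvectorUnitary.1 * diagonal (Real.sqrt ∘ hA.1.eigenvalues) *
  (star hA.1.eigenvectorUnitary : Matrix n n ℝ)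

lemma sqnorm2_eq_dotProduct {n : ℕ} (v : Fin n → ℝ) : sqnorm2 v = v ⬝ᵥ v := by
  simp [sqnorm2, dotProduct, sq]

lemma sqnorm2_nonneg {n : ℕ} (v : Fin n → ℝ) : 0 ≤ sqnorm2 v :=
  Finset.sum_nonneg fun _ _ => sq_nonneg _

lemma sqnorm2_smul {n : ℕ} (c : ℝ) (v : Fin n → ℝ) :
    sqnorm2 (c • v) = c ^ 2 * sqnorm2 v := by
  simp [sqnorm2, Finset.mul_sum, mul_pow]

lemma sq_dotProduct_le_sqnorm2_mul_sqnorm2 {n : ℕ} (u v : Fin n → ℝ) :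
    (u ⬝ᵥ v) ^ 2 ≤ sqnorm2 u * sqnorm2 v :=
  Finset.sum_mul_sq_le_sq_mul_sq Finset.univ u v

lemma sqnorm2_mulVec_le_frobenius {m n : ℕ} (M : Matrix (Fin m) (Fin n) ℝ) (x : Fin n → ℝ) :
    sqnorm2 (M *ᵥ x) ≤ (∑ i, ∑ j, M i j ^ 2) * sqnorm2 x := by
  rw [sqnorm2, Finset.sum_mul]
  exact Finset.sum_le_sum fun i _ => sq_dotProduct_le_sqnorm2_mul_sqnorm2 (M i) x

lemma specNorm_bddAbove {m n : ℕ} (M : Matrix (Fin m) (Fin n) ℝ) :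
    BddAbove {c | ∃ x : Fin n → ℝ, sqnorm2 x = 1 ∧ c = Real.sqrt (sqnorm2 (M *ᵥ x))} := by
  refine ⟨Real.sqrt (∑ i, ∑ j, M i j ^ 2), ?_⟩
  rintro c ⟨x, hx, rfl⟩
  simpa [hx] using Real.sqrt_le_sqrt (sqnorm2_mulVec_le_frobenius M x)

lemma sqrt_sqnorm2_mulVec_le_specNorm_mul {m n : ℕ} (M : Matrix (Fin m) (Fin n) ℝ)
    (y : Fin n → ℝ) :
    Real.sqrt (sqnorm2 (M *ᵥ y)) ≤ specNorm M * Real.sqrt (sqnorm2 y) := by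
  rcases (sqnorm2_nonneg y).eq_or_lt with hy0 | hypos
  · have hy : y = 0 := by
      funext i
      simpa using (Finset.sum_eq_zero_iff_of_nonneg fun j _ => sq_nonneg (y j)).mp hy0.symm i
        (Finset.mem_univ i)
    simp [hy, sqnorm2]
  · set c := Real.sqrt (sqnorm2 y)
    have hc : 0 < c := Real.sqrt_pos.mpr hypos
    have hunit : sqnorm2 (c⁻¹ • y) = 1 := by
      rw [sqnorm2_smul, inv_pow, Real.sq_sqrt hypos.le, inv_mul_cancel₀ hypos.ne']
    have hle : Real.sqrt (sqnorm2 (M *ᵥ (c⁻¹ • y))) ≤ specNorm M :=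
      le_csSup (specNorm_bddAbove M) ⟨_, hunit, rfl⟩
    rw [mulVec_smul, sqnorm2_smul, Real.sqrt_mul (sq_nonneg _), Real.sqrt_sq (inv_pos.mpr hc).le,
      inv_mul_le_iff₀ hc] at hle
    linarith

lemma abs_dotProduct_mulVec_le_specNorm_mul {n : ℕ} (M : Matrix (Fin n) (Fin n) ℝ)
    (y : Fin n → ℝ) :
    |y ⬝ᵥ M *ᵥ y| ≤ specNorm M * sqnorm2 y :=
  calc |y ⬝ᵥ M *ᵥ y| = Real.sqrt ((y ⬝ᵥ M *ᵥ y) ^ 2) := (Real.sqrt_sq_eq_abs _).symm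
    _ ≤ Real.sqrt (sqnorm2 y) * Real.sqrt (sqnorm2 (M *ᵥ y)) := by
      rw [← Real.sqrt_mul (sqnorm2_nonneg y)]
      exact Real.sqrt_le_sqrt (sq_dotProduct_le_sqnorm2_mul_sqnorm2 y _)
    _ ≤ Real.sqrt (sqnorm2 y) * (specNorm M * Real.sqrt (sqnorm2 y)) :=
      mul_le_mul_of_nonneg_left (sqrt_sqnorm2_mulVec_le_specNorm_mul M y) (Real.sqrt_nonneg _)
    _ = specNorm M * sqnorm2 y := by
      rw [mul_left_comm, Real.mul_self_sqrt (sqnorm2_nonneg y)]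

lemma sqnorm2_mulVec_of_transpose_mul_self {m n : ℕ} {U : Matrix (Fin m) (Fin n) ℝ}
    (hU : Uᵀ * U = 1) (y : Fin n → ℝ) : sqnorm2 (U *ᵥ y) = sqnorm2 y := by
  rw [sqnorm2_eq_dotProduct, sqnorm2_eq_dotProduct, dotProduct_mulVec, ← mulVec_transpose,
    mulVec_mulVec, hU, one_mulVec]

lemma dotProduct_transpose_mul_mul_mulVec {m n : ℕ} (C : Matrix (Fin m) (Fin n) ℝ)
    (G : Matrix (Fin m) (Fin m) ℝ) (x : Fin n → ℝ) :
    x ⬝ᵥ (Cᵀ * G * C) *ᵥ x = (C *ᵥ x) ⬝ᵥ G *ᵥ (C *ᵥ x) := by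
  rw [← mulVec_mulVec, ← mulVec_mulVec, dotProduct_mulVec, vecMul_transpose]

namespace Matrix.PosSemidef

variable {ι : Type*} [Fintype ι] [DecidableEq ι] {A : Matrix ι ι ℝ}

lemma sqrt_mul_self (hA : A.PosSemidef) : hA.sqrt * hA.sqrt = A := by
  set Q : Matrix ι ι ℝ := hA.1.eigenvectorUnitary.1
  set D := diagonal (Real.sqrt ∘ hA.1.eigenvalues)
  have hQ : star Q * Q = 1 := Unitary.coe_star_mul_self _
  have hD : D * D = diagonal (RCLike.ofReal ∘ hA.1.eigenvalues) := by
    rw [diagonal_mul_diagonal]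
    congr 1
    funext i
    simp [Real.mul_self_sqrt (hA.eigenvalues_nonneg i)]
  calc hA.sqrt * hA.sqrt = Q * D * (star Q * Q) * D * star Q := by
        simp only [sqrt, Q, D, Matrix.mul_assoc]
    _ = A := by
      rw [hQ, Matrix.mul_one, Matrix.mul_assoc Q, hD]
      exact hA.1.spectral_theorem.symm

lemma transpose_sqrt (hA : A.PosSemidef) : hA.sqrtᵀ = hA.sqrt := by
  simp [sqrt, transpose_mul, Matrix.mul_assoc, star_eq_conjTranspose]

end Matrix.PosSemidef

lemma sqnorm2_sqrt_mulVec {d : ℕ} {B : Matrix (Fin d) (Fin d) ℝ} (hB : B.PosSemidef)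
    (x : Fin d → ℝ) : sqnorm2 (hB.sqrt *ᵥ x) = x ⬝ᵥ B *ᵥ x := by
  rw [sqnorm2_eq_dotProduct, dotProduct_mulVec, ← mulVec_transpose, hB.transpose_sqrt,
    mulVec_mulVec, hB.sqrt_mul_self, dotProduct_comm]

theorem stmt0_general {n d r : ℕ} (ε : ℝ)
    (A U : Matrix (Fin n) (Fin d) ℝ) (S V : Matrix (Fin d) (Fin d) ℝ)
    (hU : Uᵀ * U = 1) (hA : A = U * S * Vᵀ)
    (Pi : Matrix (Fin n) (Fin r) ℝ)
    (hPi : specNorm ((1 : Matrix (Fin d) (Fin d) ℝ) - Uᵀ * Pi * Piᵀ * U) ≤ ε)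
    (hPSD : (Aᵀ * Pi * Piᵀ * A).PosSemidef) :
    ∀ x : Fin d → ℝ,
      (1 - ε) * sqnorm2 (A.mulVec x) ≤ sqnorm2 (hPSD.sqrt.mulVec x) ∧
      sqnorm2 (hPSD.sqrt.mulVec x) ≤ (1 + ε) * sqnorm2 (A.mulVec x) := by
  intro x
  set M : Matrix (Fin d) (Fin d) ℝ := 1 - Uᵀ * Pi * Piᵀ * U
  set y := (S * Vᵀ) *ᵥ x
  have hAx : sqnorm2 (A *ᵥ x) = sqnorm2 y := by
    rw [hA, Matrix.mul_assoc, ← mulVec_mulVec, sqnorm2_mulVec_of_transpose_mul_self hU]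
  have hSketch : sqnorm2 (hPSD.sqrt *ᵥ x) = sqnorm2 y - y ⬝ᵥ M *ᵥ y := by
    have hB : Aᵀ * Pi * Piᵀ * A = (S * Vᵀ)ᵀ * (Uᵀ * Pi * Piᵀ * U) * (S * Vᵀ) := by
      simp [hA, Matrix.mul_assoc]
    rw [sqnorm2_sqrt_mulVec, hB, dotProduct_transpose_mul_mul_mulVec, sqnorm2_eq_dotProduct]
    rw [sub_mulVec, one_mulVec, dotProduct_sub, sub_sub_cancel]
  have hMy := abs_le.mp ((abs_dotProduct_mulVec_le_specNorm_mul M y).trans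
    (mul_le_mul_of_nonneg_right hPi (sqnorm2_nonneg y)))
  rw [hAx, hSketch]
  constructor <;> linarith [hMy.1, hMy.2]

/-- oblivious ℓ₂-subspace embedding into ℝ^d. -/
theorem stmt0 {n d r : ℕ} (ε : ℝ) (hε : 0 ≤ ε)
    (A U : Matrix (Fin n) (Fin d) ℝ) (S V : Matrix (Fin d) (Fin d) ℝ)
    (σ : Fin d → ℝ) (hσ : ∀ i, 0 < σ i) (hS : S = Matrix.diagonal σ)
    (hU : Uᵀ * U = 1) (hV : Vᵀ * V = 1) (hA : A = U * S * Vᵀ)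
    (Pi : Matrix (Fin n) (Fin r) ℝ)
    (hPi : specNorm ((1 : Matrix (Fin d) (Fin d) ℝ) - Uᵀ * Pi * Piᵀ * U) ≤ ε)
    (hPSD : (Aᵀ * Pi * Piᵀ * A).PosSemidef) :
    ∀ x : Fin d → ℝ,
      (1 - ε) * sqnorm2 (A.mulVec x) ≤ sqnorm2 (hPSD.sqrt.mulVec x) ∧
      sqnorm2 (hPSD.sqrt.mulVec x) ≤ (1 + ε) * sqnorm2 (A.mulVec x) :=
  stmt0_general ε A U S V hU hA Pi hPi hPSD
end

section
/- Let y ∈ ℝⁿ and let S₁,…,S_r be a random partition of [n] where each index i is placed independently and uniformly at random into one of the r bins. Let γ_j = ∑_{i∈S_j} |y_i|. If ‖y‖₂ < ‖y‖₁/β, then for any fixed j, P(γ_j ≤ ‖y‖₁/(2r)) ≤ exp(−β²/(8r)). -/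
/-!
The load of bin `j` is `∑ i, X i` with `X i = z_i |y_i|` independent, nonnegative, of mean
`|y_i| / r` and second moment `y_i ^ 2 / r`. For `X ≥ 0` and `t ≤ 0` one has
`exp (t X) ≤ 1 + t X + t² X² / 2`, so `mgf X t ≤ exp (t 𝔼X + t² 𝔼X² / 2)`, and the Chernoff bound
at `t = -s / V` gives Maurer's inequality `P(∑ X i ≤ 𝔼 ∑ X i - s) ≤ exp (-s² / (2 V))` with
`V = ∑ 𝔼 (X i)²`. With `s = ‖y‖₁ / (2r)` and `V = ‖y‖₂² / r` the bound is
`exp (-‖y‖₁² / (8 r ‖y‖₂²)) ≤ exp (-β² / (8 r))`.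
-/

open MeasureTheory ProbabilityTheory Finset

lemma Real.exp_le_quadratic_of_nonpos {x : ℝ} (hx : x ≤ 0) : Real.exp x ≤ 1 + x + x ^ 2 / 2 := by
  let f : ℝ → ℝ := fun u => 1 - u + u ^ 2 / 2 - Real.exp (-u)
  have hderiv : ∀ u, HasDerivAt f (-1 + u + Real.exp (-u)) u := fun u =>
    ((((hasDerivAt_id u).const_sub 1).add ((hasDerivAt_pow 2 u).div_const 2)).sub
      (hasDerivAt_neg u).exp).congr_deriv (by simp)
  have hmono : MonotoneOn f (Set.Ici 0) :=
    monotoneOn_of_deriv_nonneg (convex_Ici 0)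
      (HasDerivAt.continuousOn fun u _ => hderiv u)
      (fun u _ => (hderiv u).differentiableAt.differentiableWithinAt)
      (fun u _ => by rw [(hderiv u).deriv]; linarith [Real.add_one_le_exp (-u)])
  have := hmono Set.self_mem_Ici (neg_nonneg.mpr hx) (neg_nonneg.mpr hx)
  simp only [f, neg_zero, neg_neg, Real.exp_zero] at this
  nlinarith

section LowerTail

variable {Ω : Type*} [MeasurableSpace Ω] {P : Measure Ω} [IsProbabilityMeasure P]

lemma integrable_exp_mul_of_nonpos_of_nonneg {X : Ω → ℝ} (hX : AEMeasurable X P)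
    (hX0 : 0 ≤ᵐ[P] X) {t : ℝ} (ht : t ≤ 0) : Integrable (fun ω => Real.exp (t * X ω)) P := by
  refine (integrable_const 1).mono' (by fun_prop) ?_
  filter_upwards [hX0] with ω hω
  rw [Real.norm_eq_abs, abs_of_pos (Real.exp_pos _), Real.exp_le_one_iff]
  exact mul_nonpos_of_nonpos_of_nonneg ht hω

lemma mgf_le_exp_of_nonneg_of_nonpos {X : Ω → ℝ} (hX : MemLp X 2 P) (hX0 : 0 ≤ᵐ[P] X)
    {t : ℝ} (ht : t ≤ 0) :
    mgf X P t ≤ Real.exp (t * ∫ ω, X ω ∂P + t ^ 2 * (∫ ω, X ω ^ 2 ∂P) / 2) := by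
  have hX1 : Integrable X P := hX.integrable one_le_two
  have hX2 : Integrable (fun ω => X ω ^ 2) P := hX.integrable_sq
  calc mgf X P t
      ≤ ∫ ω, (1 + t * X ω + t ^ 2 * X ω ^ 2 / 2) ∂P := by
        refine integral_mono_ae
          (integrable_exp_mul_of_nonpos_of_nonneg hX1.aemeasurable hX0 ht) (by fun_prop) ?_
        filter_upwards [hX0] with ω hω
        have := Real.exp_le_quadratic_of_nonpos (mul_nonpos_of_nonpos_of_nonneg ht hω)
        linarith
    _ = 1 + (t * ∫ ω, X ω ∂P + t ^ 2 * (∫ ω, X ω ^ 2 ∂P) / 2) := by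
        rw [integral_add (by fun_prop) (by fun_prop), integral_add (by fun_prop) (by fun_prop),
          integral_const, integral_const_mul, integral_div, integral_const_mul]
        simp only [probReal_univ, smul_eq_mul, mul_one]
        ring
    _ ≤ _ := by linarith [Real.add_one_le_exp (t * ∫ ω, X ω ∂P + t ^ 2 * (∫ ω, X ω ^ 2 ∂P) / 2)]

theorem measureReal_sum_le_sum_integral_sub_le {ι : Type*} [Fintype ι] {X : ι → Ω → ℝ}
    (hindep : iIndepFun X P) (hX : ∀ i, MemLp (X i) 2 P) (hX0 : ∀ i, 0 ≤ᵐ[P] X i)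
    {s : ℝ} (hs : 0 ≤ s) :
    P.real {ω | ∑ i, X i ω ≤ ∑ i, ∫ ω, X i ω ∂P - s}
      ≤ Real.exp (-s ^ 2 / (2 * ∑ i, ∫ ω, X i ω ^ 2 ∂P)) := by
  set m := ∑ i, ∫ ω, X i ω ∂P
  set V := ∑ i, ∫ ω, X i ω ^ 2 ∂P
  have hV : 0 ≤ V := Finset.sum_nonneg fun i _ => integral_nonneg fun ω => sq_nonneg _
  rcases hV.eq_or_lt with hV0 | hVpos
  -- `x / 0 = 0`, so the bound is `exp 0 = 1`
  · simp [← hV0, measureReal_le_one]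
  have hX1 : ∀ i, AEMeasurable (X i) P := fun i => (hX i).aestronglyMeasurable.aemeasurable
  -- the Chernoff parameter minimising `t * s + t ^ 2 * V / 2`
  set t := -s / V
  have ht : t ≤ 0 := div_nonpos_of_nonpos_of_nonneg (neg_nonpos.mpr hs) hV
  have hchernoff := measure_le_le_exp_mul_mgf (μ := P) (X := ∑ i, X i) (m - s) ht
    (integrable_exp_mul_of_nonpos_of_nonneg (Finset.aemeasurable_sum _ fun i _ => hX1 i)
      (by filter_upwards [ae_all_iff.mpr hX0] with ω hω
          simpa using Finset.sum_nonneg fun i _ => hω i) ht)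
  have hmgf : mgf (∑ i, X i) P t ≤ Real.exp (t * m + t ^ 2 * V / 2) := by
    rw [hindep.mgf_sum₀ hX1, Finset.mul_sum, Finset.mul_sum, Finset.sum_div,
      ← Finset.sum_add_distrib, Real.exp_sum]
    exact Finset.prod_le_prod (fun i _ => mgf_nonneg) fun i _ =>
      (mgf_le_exp_of_nonneg_of_nonpos (hX i) (hX0 i) ht).trans_eq (by ring_nf)
  calc P.real {ω | ∑ i, X i ω ≤ m - s}
      ≤ Real.exp (-t * (m - s)) * Real.exp (t * m + t ^ 2 * V / 2) := by
        simpa [Finset.sum_apply] using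
          hchernoff.trans (mul_le_mul_of_nonneg_left hmgf (Real.exp_pos _).le)
    _ = Real.exp (-s ^ 2 / (2 * V)) := by
        rw [← Real.exp_add]; congr 1; simp only [t]; field_simp; ring

end LowerTail

lemma integral_comp_of_map_eq_uniform {Ω : Type*} [MeasurableSpace Ω] {P : Measure Ω} {r : ℕ}
    {Z : Ω → Fin r} (hZ : Measurable Z) (hunif : P.map Z = (r : ENNReal)⁻¹ • Measure.count)
    (f : Fin r → ℝ) : ∫ ω, f (Z ω) ∂P = (∑ k, f k) / r := by
  rw [← integral_map hZ.aemeasurable (Measurable.of_discrete (f := f)).aestronglyMeasurable,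
    hunif, integral_smul_measure, integral_fintype Integrable.of_finite]
  simp [Measure.real, div_eq_inv_mul]

lemma sq_le_sq_sum_abs_div_sum_sq {ι : Type*} [Fintype ι] (y : ι → ℝ) {β : ℝ} (hβ : 0 < β)
    (h : Real.sqrt (∑ i, y i ^ 2) < (∑ i, |y i|) / β) :
    β ^ 2 ≤ (∑ i, |y i|) ^ 2 / ∑ i, y i ^ 2 := by
  have hL : 0 < ∑ i, |y i| := by
    simpa [hβ] using (Real.sqrt_nonneg _).trans_lt h
  have hQ : 0 < ∑ i, y i ^ 2 := by
    obtain ⟨i, -, hi⟩ := Finset.exists_lt_of_sum_lt (by simpa using hL : ∑ i, (0 : ℝ) < ∑ i, |y i|)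
    exact Finset.sum_pos' (fun i _ => sq_nonneg _)
      ⟨i, Finset.mem_univ _, by rw [← sq_abs]; positivity⟩
  rw [lt_div_iff₀ hβ, mul_comm] at h
  rw [le_div_iff₀ hQ, ← Real.sq_sqrt hQ.le, ← mul_pow]
  exact pow_le_pow_left₀ (by positivity) h.le 2

/-- The load `γ_j` of bin `j` under the assignment `σ` of indices to bins. -/
def binLoad {ι : Type*} [Fintype ι] {r : ℕ} (σ : ι → Fin r) (y : ι → ℝ) (j : Fin r) : ℝ :=
  ∑ i ∈ Finset.univ.filter (fun i => σ i = j), |y i|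

theorem measureReal_binLoad_le_half_mean_le {Ω ι : Type*} [MeasurableSpace Ω] {P : Measure Ω}
    [IsProbabilityMeasure P] [Fintype ι] {r : ℕ} (hr : 0 < r) (y : ι → ℝ) {σ : Ω → ι → Fin r}
    (hmeas : ∀ i, Measurable fun ω => σ ω i) (hindep : iIndepFun (fun i ω => σ ω i) P)
    (hunif : ∀ i, P.map (fun ω => σ ω i) = (r : ENNReal)⁻¹ • Measure.count) (j : Fin r) :
    P.real {ω | binLoad (σ ω) y j ≤ (∑ i, |y i|) / (2 * r)}
      ≤ Real.exp (-((∑ i, |y i|) ^ 2 / ∑ i, y i ^ 2) / (8 * r)) := by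
  set L := ∑ i, |y i|
  set Q := ∑ i, y i ^ 2
  -- `X i` is the contribution `z_i |y_i|` of index `i` to the load of bin `j`
  let g : ι → Fin r → ℝ := fun i k => if k = j then |y i| else 0
  let X : ι → Ω → ℝ := fun i ω => g i (σ ω i)
  have hXmean : ∀ i, ∫ ω, X i ω ∂P = |y i| / r := fun i =>
    (integral_comp_of_map_eq_uniform (hmeas i) (hunif i) (g i)).trans (by simp [g])
  have hXsq : ∀ i, ∫ ω, X i ω ^ 2 ∂P = y i ^ 2 / r := fun i =>
    (integral_comp_of_map_eq_uniform (hmeas i) (hunif i) (fun k => g i k ^ 2)).trans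
      (by simp [g, ite_pow])
  have hX : ∀ i, MemLp (X i) 2 P := fun i =>
    MemLp.of_bound ((Measurable.of_discrete (f := g i)).comp (hmeas i)).aestronglyMeasurable |y i|
      (ae_of_all _ fun ω => by by_cases h : σ ω i = j <;> simp [X, g, h])
  have hmean : ∑ i, ∫ ω, X i ω ∂P - L / (2 * r) = L / (2 * r) := by
    simp only [hXmean, ← Finset.sum_div]
    ring
  have hvar : ∑ i, ∫ ω, X i ω ^ 2 ∂P = Q / r := by
    simp only [hXsq, ← Finset.sum_div]
    rfl
  have htail := measureReal_sum_le_sum_integral_sub_le (X := X)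
    (hindep.comp g fun i => Measurable.of_discrete) hX
    (fun i => ae_of_all _ fun ω => by dsimp only [X, g]; positivity)
    (s := L / (2 * r)) (by positivity)
  rw [hmean, hvar] at htail
  convert htail using 2
  · simp only [binLoad, Finset.sum_filter]
    rfl
  · field_simp
    ring

/-- single-bin lower-tail bound for a random partition.
Each index `i ∈ [n]` is hashed independently and uniformly into one of `r` bins
(the uniform law on `Fin r` is `r⁻¹ • count`). -/
theorem stmt8 {Ω : Type*} [MeasurableSpace Ω] (P : Measure Ω) [IsProbabilityMeasure P]
    (n r : ℕ) (hr : 0 < r) (y : Fin n → ℝ) (β : ℝ) (hβ : 0 < β)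
    (σ : Ω → Fin n → Fin r) (hmeas : ∀ i, Measurable fun ω => σ ω i)
    (hindep : iIndepFun (fun i ω => σ ω i) P)
    (hunif : ∀ i, Measure.map (fun ω => σ ω i) P = (r : ENNReal)⁻¹ • Measure.count)
    (hdense : Real.sqrt (∑ i, (y i) ^ 2) < (∑ i, |y i|) / β)
    (j : Fin r) :
    P {ω | ∑ i ∈ Finset.univ.filter (fun i => σ ω i = j), |y i|
            ≤ (∑ i, |y i|) / (2 * r)}
      ≤ ENNReal.ofReal (Real.exp (-β ^ 2 / (8 * r))) := by
  rw [← ENNReal.ofReal_toReal (measure_ne_top P _)]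
  refine ENNReal.ofReal_le_ofReal
    ((measureReal_binLoad_le_half_mean_le hr y hmeas hindep hunif j).trans ?_)
  gcongr
  exact sq_le_sq_sum_abs_div_sum_sq y hβ hdense
end

section
/- Let X₁,…,X_n be independent nonnegative random variables with E[X_i²] < ∞, let X = ∑_i X_i and S² = ∑_i E[X_i²]. Then for any t > 0, P(X ≤ E[X] − t) ≤ exp(−t²/(2S²)). -/
/-!
Chernoff's method for the lower tail. For `Y ≥ 0` and `λ ≥ 0` the elementary bound
`exp (-x) ≤ 1 - x + x ^ 2 / 2` (`x ≥ 0`) gives `E[exp (-λ Y)] ≤ 1 - λ E[Y] + λ² E[Y²] / 2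
≤ exp (-λ E[Y] + λ² E[Y²] / 2)`, so only second moments enter. Independence multiplies these
bounds, and Markov's inequality for `exp (-λ X)` at the optimal `λ = t / S²` gives the claim.
-/

open MeasureTheory ProbabilityTheory Real

lemma Real.exp_neg_le_one_sub_add_sq_div_two {x : ℝ} (hx : 0 ≤ x) :
    exp (-x) ≤ 1 - x + x ^ 2 / 2 := by
  have hquad := quadratic_le_exp_of_nonneg hx
  have hinv : exp (-x) * exp x = 1 := by rw [← exp_add, neg_add_cancel, exp_zero]
  -- `(1 + x + x²/2) (1 - x + x²/2) = 1 + x⁴/4 ≥ 1 = exp (-x) exp x`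
  refine le_of_mul_le_mul_right ?_ (by positivity : 0 < 1 + x + x ^ 2 / 2)
  nlinarith [exp_pos (-x), pow_two_nonneg (x ^ 2)]

namespace ProbabilityTheory

variable {Ω : Type*} [MeasurableSpace Ω] {μ : Measure Ω}

lemma integrable_exp_mul_of_nonpos_of_nonneg [IsFiniteMeasure μ] {Z : Ω → ℝ} {l : ℝ}
    (hl : l ≤ 0) (hZ : AEMeasurable Z μ) (hZ0 : 0 ≤ᵐ[μ] Z) :
    Integrable (fun ω ↦ exp (l * Z ω)) μ := by
  simpa only [Pi.neg_apply, neg_mul_neg] using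
    integrable_exp_mul_of_le (-l) 0 (neg_nonneg.2 hl) hZ.neg (hZ0.mono fun _ h ↦ neg_nonpos.2 h)

lemma mgf_neg_le_of_nonneg [IsProbabilityMeasure μ] {Y : Ω → ℝ} (hY : 0 ≤ᵐ[μ] Y)
    (hL2 : MemLp Y 2 μ) {l : ℝ} (hl : 0 ≤ l) :
    mgf Y μ (-l) ≤ exp (-l * ∫ ω, Y ω ∂μ + l ^ 2 * (∫ ω, Y ω ^ 2 ∂μ) / 2) := by
  have hint : Integrable Y μ := hL2.integrable one_le_two
  have hint_sq : Integrable (fun ω ↦ Y ω ^ 2) μ := hL2.integrable_sq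
  have hquad : Integrable (fun ω ↦ 1 + -l * Y ω + l ^ 2 / 2 * Y ω ^ 2) μ :=
    ((integrable_const 1).add (hint.const_mul _)).add (hint_sq.const_mul _)
  calc mgf Y μ (-l)
      ≤ ∫ ω, (1 + -l * Y ω + l ^ 2 / 2 * Y ω ^ 2) ∂μ := by
        refine integral_mono_of_nonneg (ae_of_all _ fun _ ↦ (exp_pos _).le) hquad ?_
        filter_upwards [hY] with ω hω
        have := exp_neg_le_one_sub_add_sq_div_two (mul_nonneg hl hω)
        rw [← neg_mul] at this
        linarith
    _ = 1 + (-l * ∫ ω, Y ω ∂μ + l ^ 2 * (∫ ω, Y ω ^ 2 ∂μ) / 2) := by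
        rw [integral_add (f := fun ω ↦ 1 + -l * Y ω) ((integrable_const 1).add (hint.const_mul _))
            (hint_sq.const_mul _),
          integral_add (integrable_const 1) (hint.const_mul _), integral_const_mul,
          integral_const_mul, integral_const, probReal_univ, one_smul]
        ring
    _ ≤ _ := (add_comm _ _).trans_le (add_one_le_exp _)

lemma iIndepFun.mgf_sum_neg_le_of_nonneg {ι : Type*} {X : ι → Ω → ℝ} (hindep : iIndepFun X μ)
    (hX : ∀ i, 0 ≤ᵐ[μ] X i) (hL2 : ∀ i, MemLp (X i) 2 μ) (s : Finset ι) {l : ℝ} (hl : 0 ≤ l) :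
    mgf (∑ i ∈ s, X i) μ (-l) ≤
      exp (-l * ∑ i ∈ s, ∫ ω, X i ω ∂μ + l ^ 2 * (∑ i ∈ s, ∫ ω, X i ω ^ 2 ∂μ) / 2) := by
  have := hindep.isProbabilityMeasure
  rw [hindep.mgf_sum₀ (fun i ↦ (hL2 i).aestronglyMeasurable.aemeasurable), Finset.mul_sum,
    Finset.mul_sum, Finset.sum_div, ← Finset.sum_add_distrib, exp_sum]
  exact Finset.prod_le_prod (fun _ _ ↦ mgf_nonneg) fun i _ ↦ mgf_neg_le_of_nonneg (hX i) (hL2 i) hl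

lemma measureReal_le_sub_le_of_mgf_neg_le [IsProbabilityMeasure μ] {Z : Ω → ℝ} {m v t : ℝ}
    (hZ : AEMeasurable Z μ) (hZ0 : 0 ≤ᵐ[μ] Z) (hv : 0 ≤ v) (ht : 0 ≤ t)
    (hmgf : ∀ l, 0 ≤ l → mgf Z μ (-l) ≤ exp (-l * m + l ^ 2 * v / 2)) :
    μ.real {ω | Z ω ≤ m - t} ≤ exp (-t ^ 2 / (2 * v)) := by
  rcases hv.eq_or_lt with rfl | hv
  · simp -- `x / 0 = 0`, so the bound is `exp 0 = 1`
  have hl : 0 ≤ t / v := div_nonneg ht hv.le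
  calc μ.real {ω | Z ω ≤ m - t}
      ≤ exp (-(-(t / v)) * (m - t)) * mgf Z μ (-(t / v)) :=
        measure_le_le_exp_mul_mgf _ (neg_nonpos.2 hl)
          (integrable_exp_mul_of_nonpos_of_nonneg (neg_nonpos.2 hl) hZ hZ0)
    _ ≤ exp (-(-(t / v)) * (m - t)) * exp (-(t / v) * m + (t / v) ^ 2 * v / 2) := by
        gcongr
        exact hmgf _ hl
    _ = exp (-t ^ 2 / (2 * v)) := by
        rw [← exp_add]
        congr 1
        field_simp
        ring

end ProbabilityTheory

theorem stmt9_general {Ω : Type*} [MeasurableSpace Ω] (P : Measure Ω) [IsProbabilityMeasure P]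
    (n : ℕ) (X : Fin n → Ω → ℝ)
    (hnonneg : ∀ i ω, 0 ≤ X i ω)
    (hL2 : ∀ i, MemLp (X i) 2 P)
    (hindep : iIndepFun X P)
    (t : ℝ) (ht : 0 < t) :
    P {ω | ∑ i, X i ω ≤ (∑ i, ∫ ω, X i ω ∂P) - t}
      ≤ ENNReal.ofReal (Real.exp (-t ^ 2 / (2 * ∑ i, ∫ ω, (X i ω) ^ 2 ∂P))) := by
  have hsum_nonneg : 0 ≤ᵐ[P] ∑ i, X i :=
    ae_of_all _ fun ω ↦ by simpa using Finset.sum_nonneg fun i _ ↦ hnonneg i ω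
  have htail := measureReal_le_sub_le_of_mgf_neg_le
    (Finset.aemeasurable_sum _ fun i _ ↦ (hL2 i).aestronglyMeasurable.aemeasurable)
    hsum_nonneg (Finset.sum_nonneg fun i _ ↦ integral_nonneg fun ω ↦ sq_nonneg (X i ω)) ht.le
    fun l hl ↦ hindep.mgf_sum_neg_le_of_nonneg (fun i ↦ ae_of_all _ (hnonneg i)) hL2 _ hl
  rw [ENNReal.le_ofReal_iff_toReal_le (measure_ne_top P _) (exp_pos _).le]
  simpa only [Finset.sum_apply, measureReal_def] using htail

/-- Maurer's lower-tail inequality for sums of independent nonnegative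
random variables with finite second moments. -/
theorem stmt9 {Ω : Type*} [MeasurableSpace Ω] (P : Measure Ω) [IsProbabilityMeasure P]
    (n : ℕ) (X : Fin n → Ω → ℝ) (hmeas : ∀ i, Measurable (X i))
    (hnonneg : ∀ i ω, 0 ≤ X i ω)
    (hL2 : ∀ i, MemLp (X i) 2 P)
    (hindep : iIndepFun X P)
    (t : ℝ) (ht : 0 < t) :
    P {ω | ∑ i, X i ω ≤ (∑ i, ∫ ω, X i ω ∂P) - t}
      ≤ ENNReal.ofReal (Real.exp (-t ^ 2 / (2 * ∑ i, ∫ ω, (X i ω) ^ 2 ∂P))) :=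
  stmt9_general P n X hnonneg hL2 hindep t ht
end

section
/- Let U ∈ ℝ^{n×d} be a basis for the column span of A ∈ ℝ^{n×d} (so A = UR for an invertible R ∈ ℝ^{d×d}), and let Π₂ᵀ ∈ ℝ^{r×n} be any matrix. Let Ã₁ ∈ ℝ^{d×d} be a matrix satisfying ‖Ã₁x‖₂ ≤ (3/2)‖Ax‖₂ for all x, and define Ã by stacking √d·ln(td)·Ã₁ on top of Π₂ᵀA. Then for all x ∈ ℝᵈ, ‖Ãx‖₁ ≤ ((3/2)d·ln(td) + ‖Π₂ᵀU‖₁)·‖Ax‖₁, provided that U satisfies ‖Ux‖₁ ≥ ‖x‖_∞ for all x. -/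
open Matrix

/-- bounded dilation of the stacked ℓ₁-embedding.  Here `At` stacks
`√d·ln(td)·Ã₁` on top of `Π₂ᵀA`, `U` is a basis for the column span of `A` (with
`A = U R`, `R` invertible) satisfying the conditioning bound `‖Ux‖₁ ≥ ‖x‖_∞`. -/
theorem stmt11 {n d r : ℕ} (t : ℝ) (ht : 1 ≤ t) (hd : 1 ≤ d)
    (A U : Matrix (Fin n) (Fin d) ℝ) (R : Matrix (Fin d) (Fin d) ℝ)
    (hR : IsUnit R) (hAU : A = U * R)
    (hUcond : ∀ x : Fin d → ℝ, (⨆ i, |x i|) ≤ ∑ i, |U.mulVec x i|)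
    (Pi2T : Matrix (Fin r) (Fin n) ℝ)
    (A1 : Matrix (Fin d) (Fin d) ℝ)
    (hA1 : ∀ x : Fin d → ℝ,
      Real.sqrt (∑ i, (A1.mulVec x i) ^ 2) ≤ (3 / 2) * Real.sqrt (∑ i, (A.mulVec x i) ^ 2))
    (At : Matrix (Fin d ⊕ Fin r) (Fin d) ℝ)
    (hAt : At = Matrix.fromRows ((Real.sqrt d * Real.log (t * d)) • A1) (Pi2T * A)) :
    ∀ x : Fin d → ℝ,
      ∑ i, |At.mulVec x i|
        ≤ ((3 / 2) * d * Real.log (t * d) + ∑ i, ∑ j, |(Pi2T * U) i j|)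
            * ∑ i, |A.mulVec x i| := by
  intro x
  have hd1 : (1 : ℝ) ≤ (d : ℝ) := by exact_mod_cast hd
  have hd0 : (0 : ℝ) ≤ (d : ℝ) := by linarith
  have hlog : 0 ≤ Real.log (t * d) := Real.log_nonneg (by nlinarith)
  have hsd : 0 ≤ Real.sqrt d := Real.sqrt_nonneg _
  have hc0 : 0 ≤ Real.sqrt d * Real.log (t * d) := mul_nonneg hsd hlog
  -- norms we will use
  have hAx1_nonneg : 0 ≤ ∑ i, |A.mulVec x i| := Finset.sum_nonneg fun i _ => abs_nonneg _
  -- ℓ2 ≤ ℓ1 for Ax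
  have h21 : Real.sqrt (∑ i, (A.mulVec x i) ^ 2) ≤ ∑ i, |A.mulVec x i| := by
    have h1 : ∑ i, (A.mulVec x i) ^ 2 ≤ (∑ i, |A.mulVec x i|) ^ 2 := by
      have := Finset.sum_sq_le_sq_sum_of_nonneg
        (s := Finset.univ) (f := fun i => |A.mulVec x i|) (fun i _ => abs_nonneg _)
      simpa [sq_abs] using this
    calc Real.sqrt (∑ i, (A.mulVec x i) ^ 2)
        ≤ Real.sqrt ((∑ i, |A.mulVec x i|) ^ 2) := Real.sqrt_le_sqrt h1
      _ = ∑ i, |A.mulVec x i| := Real.sqrt_sq hAx1_nonneg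
  -- ℓ1 ≤ √d ℓ2 for A1 x
  have h12 : ∑ i, |A1.mulVec x i| ≤ Real.sqrt d * Real.sqrt (∑ i, (A1.mulVec x i) ^ 2) := by
    have hcs := Finset.sum_mul_sq_le_sq_mul_sq Finset.univ
      (fun _ : Fin d => (1 : ℝ)) (fun i => |A1.mulVec x i|)
    simp only [one_mul, one_pow, sq_abs, Finset.sum_const, Finset.card_univ,
      Fintype.card_fin, nsmul_eq_mul, mul_one] at hcs
    have h0 : 0 ≤ ∑ i, |A1.mulVec x i| := Finset.sum_nonneg fun i _ => abs_nonneg _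
    calc ∑ i, |A1.mulVec x i|
        = Real.sqrt ((∑ i, |A1.mulVec x i|) ^ 2) := (Real.sqrt_sq h0).symm
      _ ≤ Real.sqrt ((d : ℝ) * ∑ i, (A1.mulVec x i) ^ 2) := Real.sqrt_le_sqrt hcs
      _ = Real.sqrt d * Real.sqrt (∑ i, (A1.mulVec x i) ^ 2) := Real.sqrt_mul hd0 _
  -- bound on first block
  have hfirst : ∑ i, |A1.mulVec x i| ≤ Real.sqrt d * ((3 / 2) * ∑ i, |A.mulVec x i|) := by
    refine h12.trans ?_
    refine mul_le_mul_of_nonneg_left ?_ hsd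
    exact (hA1 x).trans (by nlinarith [hA1 x])
  -- second block
  set M := Pi2T * U with hM
  set v := R.mulVec x with hv
  have hMv : (Pi2T * A).mulVec x = M.mulVec v := by
    rw [hAU, hM, hv, ← Matrix.mul_assoc, ← Matrix.mulVec_mulVec]
  have hUv : U.mulVec v = A.mulVec x := by
    rw [hAU, hv, ← Matrix.mulVec_mulVec]
  have hne : Nonempty (Fin d) := ⟨⟨0, hd⟩⟩
  have hS : (⨆ j, |v j|) ≤ ∑ i, |A.mulVec x i| := by
    have := hUcond v; rwa [hUv] at this
  have hjS : ∀ j, |v j| ≤ ⨆ j, |v j| := fun j =>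
    le_ciSup (f := fun j => |v j|) (Set.Finite.bddAbove (Set.finite_range _)) j
  have hsecond : ∑ i, |(Pi2T * A).mulVec x i|
      ≤ (∑ i, ∑ j, |M i j|) * ∑ i, |A.mulVec x i| := by
    rw [hMv]
    have hstep : ∑ i, |M.mulVec v i| ≤ (∑ i, ∑ j, |M i j|) * (⨆ j, |v j|) := by
      rw [Finset.sum_mul]
      refine Finset.sum_le_sum fun i _ => ?_
      calc |M.mulVec v i| = |∑ j, M i j * v j| := by rfl
        _ ≤ ∑ j, |M i j * v j| := Finset.abs_sum_le_sum_abs _ _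
        _ = ∑ j, |M i j| * |v j| := by simp [abs_mul]
        _ ≤ ∑ j, |M i j| * (⨆ j, |v j|) :=
            Finset.sum_le_sum fun j _ => mul_le_mul_of_nonneg_left (hjS j) (abs_nonneg _)
        _ = (∑ j, |M i j|) * (⨆ j, |v j|) := by rw [Finset.sum_mul]
    refine hstep.trans ?_
    exact mul_le_mul_of_nonneg_left hS
      (Finset.sum_nonneg fun i _ => Finset.sum_nonneg fun j _ => abs_nonneg _)
  -- put everything together
  subst hAt
  rw [Matrix.fromRows_mulVec, Fintype.sum_sum_type]
  simp only [Sum.elim_inl, Sum.elim_inr, Matrix.smul_mulVec, Pi.smul_apply,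
    smul_eq_mul, abs_mul, abs_of_nonneg hc0]
  rw [← Finset.mul_sum]
  have hsq : Real.sqrt d * Real.sqrt d = (d : ℝ) := Real.mul_self_sqrt hd0
  have h1 : Real.sqrt d * Real.log (t * d) * ∑ i, |A1.mulVec x i|
      ≤ (3 / 2) * d * Real.log (t * d) * ∑ i, |A.mulVec x i| := by
    calc Real.sqrt d * Real.log (t * d) * ∑ i, |A1.mulVec x i|
        ≤ Real.sqrt d * Real.log (t * d) *
            (Real.sqrt d * ((3 / 2) * ∑ i, |A.mulVec x i|)) :=
          mul_le_mul_of_nonneg_left hfirst hc0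
      _ = (3 / 2) * d * Real.log (t * d) * ∑ i, |A.mulVec x i| := by
          linear_combination (3 / 2) * Real.log (t * d) * (∑ i, |A.mulVec x i|) * hsq
  calc Real.sqrt d * Real.log (t * d) * ∑ i, |A1.mulVec x i| + ∑ i, |(Pi2T * A).mulVec x i|
      ≤ (3 / 2) * d * Real.log (t * d) * ∑ i, |A.mulVec x i|
        + (∑ i, ∑ j, |M i j|) * ∑ i, |A.mulVec x i| := add_le_add h1 hsecond
    _ = ((3 / 2) * d * Real.log (t * d) + ∑ i, ∑ j, |M i j|) * ∑ i, |A.mulVec x i| := by ring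
end

section
/- Let A ∈ ℝ^{n×d} and let à ∈ ℝ^{r×d} satisfy ‖Ax‖₁ ≤ ‖Ãx‖₁ ≤ κ‖Ax‖₁ for all x ∈ ℝᵈ. Let à = QR be a QR factorization with Q ∈ ℝ^{r×d} having orthonormal columns and R ∈ ℝ^{d×d} invertible, and set U = AR^{-1}. Then: (i) ‖U‖₁ ≤ d√r (entrywise 1-norm); and (ii) ‖Ux‖₁ ≥ (1/κ)‖x‖₂ ≥ (1/κ)‖x‖_∞ for all x ∈ ℝᵈ. Consequently the ℓ₁-condition number α(U) = ‖U‖₁ / min_{‖x‖_∞=1}‖Ux‖₁ satisfies α(U) ≤ κ d√r. -/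
open Matrix

/-- well-conditioned basis from an ℓ₁-embedding via QR.
`‖U‖₁` is the entrywise 1-norm, and `α(U) = ‖U‖₁ / min_{‖x‖_∞ = 1} ‖Ux‖₁`. -/
theorem stmt15 {n d r : ℕ} (κ : ℝ) (hκ : 1 ≤ κ)
    (A : Matrix (Fin n) (Fin d) ℝ) (At : Matrix (Fin r) (Fin d) ℝ)
    (hiso : ∀ x : Fin d → ℝ,
      (∑ i, |A.mulVec x i|) ≤ (∑ i, |At.mulVec x i|) ∧
      (∑ i, |At.mulVec x i|) ≤ κ * ∑ i, |A.mulVec x i|)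
    (Q : Matrix (Fin r) (Fin d) ℝ) (R : Matrix (Fin d) (Fin d) ℝ)
    (hQ : Qᵀ * Q = 1) (hR : IsUnit R) (hQR : At = Q * R) :
    (∑ i, ∑ j, |(A * R⁻¹) i j| ≤ d * Real.sqrt r) ∧
    (∀ x : Fin d → ℝ,
      (1 / κ) * Real.sqrt (∑ i, (x i) ^ 2) ≤ ∑ i, |(A * R⁻¹).mulVec x i| ∧
      (1 / κ) * (⨆ i, |x i|) ≤ ∑ i, |(A * R⁻¹).mulVec x i|) ∧
    (∑ i, ∑ j, |(A * R⁻¹) i j|) /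
        sInf {c | ∃ x : Fin d → ℝ, (⨆ i, |x i|) = 1 ∧ c = ∑ i, |(A * R⁻¹).mulVec x i|}
      ≤ κ * d * Real.sqrt r := by
  have hκ0 : (0:ℝ) < κ := lt_of_lt_of_le one_pos hκ
  have hRdet : IsUnit R.det := (Matrix.isUnit_iff_isUnit_det R).mp hR
  have hRR : R * R⁻¹ = 1 := Matrix.mul_nonsing_inv R hRdet
  -- At ∘ R⁻¹ = Q
  have hAtQ : ∀ x : Fin d → ℝ, At.mulVec (R⁻¹.mulVec x) = Q.mulVec x := by
    intro x
    rw [Matrix.mulVec_mulVec, hQR, Matrix.mul_assoc, hRR, Matrix.mul_one]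
  -- ‖Qx‖₂² = ‖x‖₂²
  have hQ2 : ∀ x : Fin d → ℝ, ∑ i, (Q.mulVec x i) ^ 2 = ∑ i, (x i) ^ 2 := by
    intro x
    have h1 : ∑ i, (Q.mulVec x i) ^ 2 = (Q.mulVec x) ⬝ᵥ (Q.mulVec x) := by
      simp [dotProduct, sq]
    have h2 : (Q.mulVec x) ⬝ᵥ (Q.mulVec x) = x ⬝ᵥ x := by
      rw [Matrix.dotProduct_mulVec, ← Matrix.mulVec_transpose, Matrix.mulVec_mulVec, hQ,
        Matrix.one_mulVec]
    rw [h1, h2]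
    simp [dotProduct, sq]
  -- ℓ₂ ≤ ℓ₁ for Qx
  have hQge : ∀ x : Fin d → ℝ, Real.sqrt (∑ i, (x i) ^ 2) ≤ ∑ i, |Q.mulVec x i| := by
    intro x
    rw [← hQ2 x]
    have h1 : ∑ i, (Q.mulVec x i) ^ 2 ≤ (∑ i, |Q.mulVec x i|) ^ 2 := by
      have := Finset.sum_sq_le_sq_sum_of_nonneg
        (f := fun i => |Q.mulVec x i|) (s := Finset.univ) (fun i _ => abs_nonneg _)
      simpa [sq_abs] using this
    calc Real.sqrt (∑ i, (Q.mulVec x i) ^ 2) ≤ Real.sqrt ((∑ i, |Q.mulVec x i|) ^ 2) :=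
          Real.sqrt_le_sqrt h1
      _ = ∑ i, |Q.mulVec x i| := Real.sqrt_sq (Finset.sum_nonneg fun i _ => abs_nonneg _)
  -- ℓ₁ ≤ √r ℓ₂ for Qx
  have hQle : ∀ x : Fin d → ℝ,
      ∑ i, |Q.mulVec x i| ≤ Real.sqrt r * Real.sqrt (∑ i, (x i) ^ 2) := by
    intro x
    have hcs := Finset.sum_mul_sq_le_sq_mul_sq Finset.univ (fun _ : Fin r => (1:ℝ))
      (fun i => |Q.mulVec x i|)
    simp only [one_mul, one_pow, Finset.sum_const, Finset.card_univ, Fintype.card_fin,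
      nsmul_eq_mul, mul_one, sq_abs] at hcs
    have h2 : (∑ i, |Q.mulVec x i|) ^ 2 ≤ (r : ℝ) * ∑ i, (x i) ^ 2 := by
      rw [← hQ2 x]; exact hcs
    have hnn : (0:ℝ) ≤ ∑ i, |Q.mulVec x i| := Finset.sum_nonneg fun i _ => abs_nonneg _
    calc ∑ i, |Q.mulVec x i| = Real.sqrt ((∑ i, |Q.mulVec x i|) ^ 2) :=
          (Real.sqrt_sq hnn).symm
      _ ≤ Real.sqrt ((r : ℝ) * ∑ i, (x i) ^ 2) := Real.sqrt_le_sqrt h2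
      _ = Real.sqrt r * Real.sqrt (∑ i, (x i) ^ 2) := Real.sqrt_mul (by positivity) _
  -- U = A * R⁻¹
  have hUx : ∀ x : Fin d → ℝ, (A * R⁻¹).mulVec x = A.mulVec (R⁻¹.mulVec x) := by
    intro x; rw [← Matrix.mulVec_mulVec]
  -- upper bound on ‖Ux‖₁
  have hUle : ∀ x : Fin d → ℝ,
      ∑ i, |(A * R⁻¹).mulVec x i| ≤ Real.sqrt r * Real.sqrt (∑ i, (x i) ^ 2) := by
    intro x
    rw [hUx x]
    calc ∑ i, |A.mulVec (R⁻¹.mulVec x) i| ≤ ∑ i, |At.mulVec (R⁻¹.mulVec x) i| :=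
          (hiso _).1
      _ = ∑ i, |Q.mulVec x i| := by rw [hAtQ]
      _ ≤ _ := hQle x
  -- lower bound on ‖Ux‖₁
  have hUge : ∀ x : Fin d → ℝ,
      (1 / κ) * Real.sqrt (∑ i, (x i) ^ 2) ≤ ∑ i, |(A * R⁻¹).mulVec x i| := by
    intro x
    have h1 : Real.sqrt (∑ i, (x i) ^ 2) ≤ κ * ∑ i, |(A * R⁻¹).mulVec x i| := by
      rw [hUx x]
      calc Real.sqrt (∑ i, (x i) ^ 2) ≤ ∑ i, |Q.mulVec x i| := hQge x
        _ = ∑ i, |At.mulVec (R⁻¹.mulVec x) i| := by rw [hAtQ]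
        _ ≤ κ * ∑ i, |A.mulVec (R⁻¹.mulVec x) i| := (hiso _).2
    rw [div_mul_eq_mul_div, one_mul, div_le_iff₀ hκ0]
    linarith [h1]
  -- sup norm ≤ ℓ₂ norm
  have hsup : ∀ x : Fin d → ℝ, (⨆ i, |x i|) ≤ Real.sqrt (∑ i, (x i) ^ 2) := by
    intro x
    rcases isEmpty_or_nonempty (Fin d) with h | h
    · simp [Real.iSup_of_isEmpty, Real.sqrt_nonneg]
    · apply ciSup_le
      intro i
      have : (x i) ^ 2 ≤ ∑ j, (x j) ^ 2 :=
        Finset.single_le_sum (f := fun j => (x j) ^ 2) (fun j _ => sq_nonneg _)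
          (Finset.mem_univ i)
      calc |x i| = Real.sqrt ((x i) ^ 2) := (Real.sqrt_sq_eq_abs _).symm
        _ ≤ Real.sqrt (∑ j, (x j) ^ 2) := Real.sqrt_le_sqrt this
  -- part (i)
  have hUentry : ∑ i, ∑ j, |(A * R⁻¹) i j| ≤ d * Real.sqrt r := by
    rw [Finset.sum_comm]
    have hcol : ∀ j : Fin d, ∑ i, |(A * R⁻¹) i j| ≤ Real.sqrt r := by
      intro j
      have h1 : ∑ i, |(A * R⁻¹) i j| = ∑ i, |(A * R⁻¹).mulVec (Pi.single j 1) i| := by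
        simp [Matrix.mulVec_single]
      have h2 : ∑ i, ((Pi.single j 1 : Fin d → ℝ) i) ^ 2 = 1 := by
        simp [Pi.single_apply, Finset.sum_ite_eq']
      have := hUle (Pi.single j 1)
      rw [h2, Real.sqrt_one, mul_one] at this
      rw [h1]; exact this
    calc ∑ j : Fin d, ∑ i, |(A * R⁻¹) i j| ≤ ∑ j : Fin d, Real.sqrt r :=
          Finset.sum_le_sum fun j _ => hcol j
      _ = d * Real.sqrt r := by simp [Finset.sum_const, nsmul_eq_mul]
  refine ⟨hUentry, fun x => ⟨hUge x, ?_⟩, ?_⟩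
  · calc (1 / κ) * (⨆ i, |x i|) ≤ (1 / κ) * Real.sqrt (∑ i, (x i) ^ 2) := by
          apply mul_le_mul_of_nonneg_left (hsup x) (by positivity)
      _ ≤ _ := hUge x
  · -- part (iii)
    rcases Nat.eq_zero_or_pos d with hd | hd
    · subst hd
      have h0 : (∑ i : Fin n, ∑ j : Fin 0, |(A * R⁻¹) i j|) = 0 := by simp
      rw [h0, zero_div]
      positivity
    · have : Nonempty (Fin d) := ⟨⟨0, hd⟩⟩
      set S := {c | ∃ x : Fin d → ℝ, (⨆ i, |x i|) = 1 ∧ c = ∑ i, |(A * R⁻¹).mulVec x i|}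
      have hSne : S.Nonempty := by
        refine ⟨∑ i, |(A * R⁻¹).mulVec (fun _ => 1) i|, fun _ => 1, ?_, rfl⟩
        simp [ciSup_const]
      have hSlb : ∀ c ∈ S, 1 / κ ≤ c := by
        rintro c ⟨x, hx, rfl⟩
        have h2 : (1 / κ) * (⨆ i, |x i|) ≤ ∑ i, |(A * R⁻¹).mulVec x i| :=
          le_trans (mul_le_mul_of_nonneg_left (hsup x) (by positivity)) (hUge x)
        rw [hx, mul_one] at h2
        exact h2
      have hInf : 1 / κ ≤ sInf S := le_csInf hSne hSlb
      have hInfpos : 0 < sInf S := lt_of_lt_of_le (by positivity) hInf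
      rw [div_le_iff₀ hInfpos]
      calc ∑ i, ∑ j, |(A * R⁻¹) i j| ≤ d * Real.sqrt r := hUentry
        _ = κ * d * Real.sqrt r * (1 / κ) := by field_simp
        _ ≤ κ * d * Real.sqrt r * sInf S := by
            apply mul_le_mul_of_nonneg_left hInf (by positivity)
end
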